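/- Let 1 ≤ k ≤ n − 1, and let g_0, g_1, …, g_{t+1} be the sequence of remainders produced by the Extended Euclidean Algorithm applied to L(X) and H(X). Then C_k(A, v) is LCD if and only if for every i ∈ {1, …, t+1}, either deg g_{i−1} ≤ n − k or deg g_i ≥ n − k. -/

import Mathlib

/-- `L(X) = ∏ i (X - a i)`. -/
noncomputable def Lpoly {K : Type*} [Field K] {n : ℕ} (a : Fin n → K) : Polynomial K :=
  ∏ i, (Polynomial.X - Polynomial.C (a i))

/-- `L_{a_i}(X) = L(X)/(X - a i) = ∏_{j ≠ i} (X - a j)`. -/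
noncomputable def Lipoly {K : Type*} [Field K] {n : ℕ} (a : Fin n → K) (i : Fin n) : Polynomial K :=
  ∏ j ∈ Finset.univ.erase i, (Polynomial.X - Polynomial.C (a j))

/-- `H(X) = ∑ i, v_i² L_{a_i}(X)`. -/
noncomputable def Hpoly {K : Type*} [Field K] {n : ℕ} (a v : Fin n → K) : Polynomial K :=
  ∑ i, Polynomial.C (v i ^ 2) * Lipoly a i

/-- The generalized Reed–Solomon code `C_k(A, v) = {(v_i f(a_i))_i : deg f < k}`. -/
noncomputable def grsFin {K : Type*} [Field K] {n : ℕ} (a v : Fin n → K) (k : ℕ) :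
    Submodule K (Fin n → K) :=
  Submodule.map (LinearMap.pi fun i => v i • (Polynomial.aeval (a i)).toLinearMap)
    (Polynomial.degreeLT K k)

/-- The dual code `C^⊥` with respect to the standard dot product. -/
def dualCode {K : Type*} [Field K] {ι : Type*} [Fintype ι] (C : Submodule K (ι → K)) :
    Submodule K (ι → K) where
  carrier := {w | ∀ c ∈ C, ∑ i, w i * c i = 0}
  zero_mem' := by simp
  add_mem' := fun {w w'} hw hw' c hc => by
    simp only [Pi.add_apply, add_mul, Finset.sum_add_distrib, hw c hc, hw' c hc, add_zero]
  smul_mem' := fun r w hw c hc => by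
    simp only [Pi.smul_apply, smul_eq_mul, mul_assoc, ← Finset.mul_sum, hw c hc, mul_zero]

/-- A linear code is LCD if it meets its dual trivially. -/
def IsLCD {K : Type*} [Field K] {ι : Type*} [Fintype ι] (C : Submodule K (ι → K)) : Prop :=
  C ⊓ dualCode C = ⊥

/-- The remainder sequence of the (Extended) Euclidean Algorithm:
`g 0 = L`, `g 1 = H`, `g (i+2) = g i % g (i+1)`. -/
noncomputable def euclRem {K : Type*} [Field K] (L H : Polynomial K) : ℕ → Polynomial K :=
  fun i => (Nat.rec (motive := fun _ => Polynomial K × Polynomial K) (L, H)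
    (fun _ p => (p.2, p.1 % p.2)) i).1

namespace GRSAux
open Polynomial

variable {K : Type*} [Field K] {n : ℕ}

lemma Lpoly_monic (a : Fin n → K) : (Lpoly a).Monic :=
  monic_prod_of_monic _ _ fun i _ => monic_X_sub_C (a i)

lemma Lpoly_natDegree (a : Fin n → K) : (Lpoly a).natDegree = n := by
  rw [Lpoly, natDegree_prod _ _ fun i _ => X_sub_C_ne_zero (a i)]
  simp

lemma Lpoly_degree (a : Fin n → K) : (Lpoly a).degree = (n : ℕ) := by
  rw [degree_eq_natDegree (Lpoly_monic a).ne_zero, Lpoly_natDegree]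

lemma Lipoly_monic (a : Fin n → K) (i : Fin n) : (Lipoly a i).Monic :=
  monic_prod_of_monic _ _ fun j _ => monic_X_sub_C (a j)

lemma Lipoly_natDegree (a : Fin n → K) (i : Fin n) : (Lipoly a i).natDegree = n - 1 := by
  rw [Lipoly, natDegree_prod _ _ fun j _ => X_sub_C_ne_zero (a j)]
  simp [Finset.card_erase_of_mem]

lemma Lipoly_degree (a : Fin n → K) (i : Fin n) : (Lipoly a i).degree = ((n - 1 : ℕ) : WithBot ℕ) := by
  rw [degree_eq_natDegree (Lipoly_monic a i).ne_zero, Lipoly_natDegree]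

lemma Lipoly_eval_self_ne_zero {a : Fin n → K} (ha : Function.Injective a) (i : Fin n) :
    (Lipoly a i).eval (a i) ≠ 0 := by
  rw [Lipoly, eval_prod]
  refine Finset.prod_ne_zero_iff.2 fun j hj => ?_
  simp only [eval_sub, eval_X, eval_C]
  exact sub_ne_zero.2 fun h => (Finset.mem_erase.1 hj).1 (ha h).symm

lemma Lipoly_eval_other (a : Fin n → K) {i j : Fin n} (hij : j ≠ i) :
    (Lipoly a i).eval (a j) = 0 := by
  rw [Lipoly, eval_prod]
  exact Finset.prod_eq_zero (Finset.mem_erase.2 ⟨hij, Finset.mem_univ j⟩) (by simp)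

lemma Hpoly_eval (a v : Fin n → K) (j : Fin n) :
    (Hpoly a v).eval (a j) = v j ^ 2 * (Lipoly a j).eval (a j) := by
  rw [Hpoly, eval_finset_sum, Finset.sum_eq_single j]
  · simp
  · intro i _ hij
    simp [Lipoly_eval_other a (Ne.symm hij)]
  · simp

lemma Hpoly_degree_lt (hn : 0 < n) (a v : Fin n → K) :
    (Hpoly a v).degree < (n : WithBot ℕ) := by
  refine lt_of_le_of_lt (degree_sum_le _ _) ?_
  refine (Finset.sup_lt_iff (WithBot.bot_lt_coe n)).2 fun i _ => ?_
  calc degree (C (v i ^ 2) * Lipoly a i) ≤ degree (C (v i ^ 2)) + degree (Lipoly a i) :=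
        degree_mul_le _ _
    _ ≤ 0 + ((n - 1 : ℕ) : WithBot ℕ) := add_le_add degree_C_le (le_of_eq (Lipoly_degree a i))
    _ < (n : WithBot ℕ) := by
        rw [zero_add]
        exact_mod_cast Nat.sub_lt hn one_pos

lemma Lpoly_dvd {a : Fin n → K} (ha : Function.Injective a) {p : Polynomial K}
    (h : ∀ j, p.eval (a j) = 0) : Lpoly a ∣ p := by
  rw [Lpoly]
  exact Fintype.prod_dvd_of_coprime (pairwise_coprime_X_sub_C ha)
    fun i => dvd_iff_isRoot.2 (h i)

lemma isCoprime_L_H {a : Fin n → K} (ha : Function.Injective a) {v : Fin n → K}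
    (hv : ∀ i, v i ≠ 0) : IsCoprime (Lpoly a) (Hpoly a v) := by
  rw [Lpoly]
  refine IsCoprime.prod_left fun i _ =>
    ((irreducible_X_sub_C (a i)).coprime_iff_not_dvd).2 fun hdvd => ?_
  have h0 : (Hpoly a v).eval (a i) = 0 := dvd_iff_isRoot.1 hdvd
  rw [Hpoly_eval] at h0
  exact (mul_ne_zero (pow_ne_zero 2 (hv i)) (Lipoly_eval_self_ne_zero ha i)) h0

lemma key_mod (hn : 0 < n) {a : Fin n → K} (ha : Function.Injective a) (v : Fin n → K)
    (P : Polynomial K) :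
    (Hpoly a v * P) %ₘ Lpoly a = ∑ i, C (v i ^ 2 * P.eval (a i)) * Lipoly a i := by
  set R := ∑ i, C (v i ^ 2 * P.eval (a i)) * Lipoly a i with hR
  have hdvd : Lpoly a ∣ (Hpoly a v * P - R) := by
    apply Lpoly_dvd ha
    intro j
    have hRj : R.eval (a j) = v j ^ 2 * P.eval (a j) * (Lipoly a j).eval (a j) := by
      rw [hR, eval_finset_sum, Finset.sum_eq_single j]
      · simp only [eval_mul, eval_C]
      · intro i _ hij
        simp [Lipoly_eval_other a (Ne.symm hij)]
      · simp
    simp only [eval_sub, eval_mul, Hpoly_eval, hRj]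
    ring
  have h1 : (Hpoly a v * P) %ₘ Lpoly a = R %ₘ Lpoly a := by
    have h2 := (modByMonic_eq_zero_iff_dvd (Lpoly_monic a)).2 hdvd
    rw [sub_modByMonic] at h2
    exact sub_eq_zero.1 h2
  rw [h1, (modByMonic_eq_self_iff (Lpoly_monic a)).2]
  rw [Lpoly_degree]
  refine lt_of_le_of_lt (degree_sum_le _ _) ?_
  refine (Finset.sup_lt_iff (WithBot.bot_lt_coe n)).2 fun i _ => ?_
  calc degree (C (v i ^ 2 * P.eval (a i)) * Lipoly a i)
      ≤ degree (C (v i ^ 2 * P.eval (a i))) + degree (Lipoly a i) := degree_mul_le _ _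
    _ ≤ 0 + ((n - 1 : ℕ) : WithBot ℕ) := add_le_add degree_C_le (le_of_eq (Lipoly_degree a i))
    _ < (n : WithBot ℕ) := by
        rw [zero_add]; exact_mod_cast Nat.sub_lt hn one_pos

lemma key_coeff (hn : 0 < n) {a : Fin n → K} (ha : Function.Injective a) (v : Fin n → K)
    (P : Polynomial K) :
    ((Hpoly a v * P) %ₘ Lpoly a).coeff (n - 1) = ∑ i, v i ^ 2 * P.eval (a i) := by
  rw [key_mod hn ha v P, finset_sum_coeff]
  refine Finset.sum_congr rfl fun i _ => ?_
  rw [coeff_C_mul, ← Lipoly_natDegree a i, (Lipoly_monic a i).coeff_natDegree, mul_one]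


section EEA

lemma euclRem_zero (L H : Polynomial K) : euclRem L H 0 = L := rfl
lemma euclRem_one (L H : Polynomial K) : euclRem L H 1 = H := rfl
lemma euclRem_add_two (L H : Polynomial K) (i : ℕ) :
    euclRem L H (i + 2) = euclRem L H i % euclRem L H (i + 1) := by
  induction i with
  | zero => rfl
  | succ j ih => rfl

noncomputable def wseq (L H : Polynomial K) : ℕ → Polynomial K
  | 0 => 0
  | 1 => 1
  | (i+2) => wseq L H i - (euclRem L H i / euclRem L H (i+1)) * wseq L H (i+1)

noncomputable def useq (L H : Polynomial K) : ℕ → Polynomial K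
  | 0 => 1
  | 1 => 0
  | (i+2) => useq L H i - (euclRem L H i / euclRem L H (i+1)) * useq L H (i+1)

lemma wseq_zero (L H : Polynomial K) : wseq L H 0 = 0 := rfl
lemma wseq_one (L H : Polynomial K) : wseq L H 1 = 1 := rfl
lemma wseq_add_two (L H : Polynomial K) (i : ℕ) :
    wseq L H (i+2) = wseq L H i - (euclRem L H i / euclRem L H (i+1)) * wseq L H (i+1) := by
  rw [wseq]

lemma useq_zero (L H : Polynomial K) : useq L H 0 = 1 := rfl
lemma useq_one (L H : Polynomial K) : useq L H 1 = 0 := rfl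
lemma useq_add_two (L H : Polynomial K) (i : ℕ) :
    useq L H (i+2) = useq L H i - (euclRem L H i / euclRem L H (i+1)) * useq L H (i+1) := by
  rw [useq]

private lemma two_step {P : ℕ → Prop} (h0 : P 0) (h1 : P 1)
    (hs : ∀ i, P i → P (i+1) → P (i+2)) : ∀ i, P i := by
  have key : ∀ i, P i ∧ P (i+1) := by
    intro i
    induction i with
    | zero => exact ⟨h0, h1⟩
    | succ j ih => exact ⟨ih.2, hs j ih.1 ih.2⟩
  exact fun i => (key i).1

lemma euclRem_repr (L H : Polynomial K) :
    ∀ i, euclRem L H i = useq L H i * L + wseq L H i * H := by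
  refine two_step ?_ ?_ ?_
  · rw [euclRem_zero, useq_zero, wseq_zero]; ring
  · rw [euclRem_one, useq_one, wseq_one]; ring
  · intro i h1 h2
    rw [euclRem_add_two, EuclideanDomain.mod_eq_sub_mul_div, useq_add_two, wseq_add_two, h1, h2]
    ring

lemma euclRem_det (L H : Polynomial K) :
    ∀ i, useq L H i * wseq L H (i+1) - useq L H (i+1) * wseq L H i = (-1) ^ i := by
  intro i
  induction i with
  | zero => rw [useq_zero, useq_one, wseq_zero, wseq_one]; ring
  | succ j ih =>
    show useq L H (j+1) * wseq L H (j+2) - useq L H (j+2) * wseq L H (j+1) = (-1) ^ (j+1)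
    rw [useq_add_two, wseq_add_two, pow_succ]
    linear_combination (-1 : Polynomial K) * ih

lemma euclRem_isCoprime {L H : Polynomial K} (hc : IsCoprime L H) (i : ℕ) :
    IsCoprime (euclRem L H i) (euclRem L H (i+1)) := by
  obtain ⟨x, y, hxy⟩ := hc
  set e : Polynomial K := (-1) ^ i with he
  have hee : e * e = 1 := by rw [he, ← mul_pow]; norm_num
  have h3 := euclRem_det L H i
  have h1 := euclRem_repr L H i
  have h2 := euclRem_repr L H (i+1)
  refine ⟨e * (x * wseq L H (i+1) - y * useq L H (i+1)),
    e * (y * useq L H i - x * wseq L H i), ?_⟩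
  linear_combination (e * (x * wseq L H (i+1) - y * useq L H (i+1))) * h1 +
    (e * (y * useq L H i - x * wseq L H i)) * h2 + (e * (x * L + y * H)) * h3 +
    (e * e) * hxy + hee

lemma wseq_useq_coprime (L H : Polynomial K) (i : ℕ) :
    IsCoprime (wseq L H i) (useq L H i) := by
  set e : Polynomial K := (-1) ^ i with he
  have hee : e * e = 1 := by rw [he, ← mul_pow]; norm_num
  have h3 := euclRem_det L H i
  exact ⟨-e * useq L H (i+1), e * wseq L H (i+1), by linear_combination e * h3 + hee⟩

lemma degree_mod_lt' (p : Polynomial K) {q : Polynomial K} (hq : q ≠ 0) :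
    degree (p % q) < degree q := by
  rw [Polynomial.mod_def]
  exact (degree_modByMonic_lt p (monic_mul_leadingCoeff_inv hq)).trans_le
    (degree_mul_leadingCoeff_inv q hq).le

lemma euclRem_deg_dec {L H : Polynomial K} (hLH : degree H < degree L) :
    ∀ j, euclRem L H j ≠ 0 → degree (euclRem L H (j+1)) < degree (euclRem L H j)
  | 0 => fun _ => by rw [euclRem_zero, euclRem_one]; exact hLH
  | (j+1) => fun hj => by rw [euclRem_add_two]; exact degree_mod_lt' _ hj

lemma euclRem_unit_of_zero {L H : Polynomial K} (hc : IsCoprime L H) {j : ℕ}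
    (hj : euclRem L H j = 0) :
    ∀ d, euclRem L H (j + d) = 0 ∨ IsUnit (euclRem L H (j + d)) := by
  have base1 : IsUnit (euclRem L H (j+1)) := by
    have h := euclRem_isCoprime hc j
    rw [hj] at h
    exact isCoprime_zero_left.1 h
  have key : ∀ d, (euclRem L H (j+d) = 0 ∨ IsUnit (euclRem L H (j+d))) ∧
      (euclRem L H (j+d+1) = 0 ∨ IsUnit (euclRem L H (j+d+1))) := by
    intro d
    induction d with
    | zero => exact ⟨Or.inl hj, Or.inr base1⟩
    | succ m ih =>
      refine ⟨ih.2, ?_⟩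
      show euclRem L H (j+m+2) = 0 ∨ IsUnit (euclRem L H (j+m+2))
      rw [euclRem_add_two]
      rcases ih.1 with h0 | hu
      · left; rw [h0, EuclideanDomain.zero_mod]
      rcases ih.2 with h0' | hu'
      · right; rw [h0', EuclideanDomain.mod_zero]; exact hu
      · left
        have hlt : degree (euclRem L H (j+m) % euclRem L H (j+m+1)) < 0 := by
          have h5 := degree_mod_lt' (euclRem L H (j+m)) hu'.ne_zero
          rwa [degree_eq_zero_of_isUnit hu'] at h5
        exact degree_eq_bot.1 (Nat.WithBot.lt_zero_iff.1 hlt)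
  intro d
  exact (key d).1

lemma wseq_deg {L H : Polynomial K} (hLH : degree H < degree L) :
    ∀ i, (∀ j, j ≤ i → euclRem L H j ≠ 0) →
      wseq L H (i+1) ≠ 0 ∧
      (wseq L H (i+1)).natDegree + (euclRem L H i).natDegree = L.natDegree ∧
      degree (wseq L H i) < degree (wseq L H (i+1)) := by
  intro i
  induction i with
  | zero =>
    intro h
    refine ⟨by rw [wseq_one]; exact one_ne_zero, ?_, ?_⟩
    · rw [wseq_one, euclRem_zero, natDegree_one, zero_add]
    · rw [wseq_zero, wseq_one, degree_zero, degree_one]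
      exact WithBot.bot_lt_coe 0
  | succ i ih =>
    intro h
    obtain ⟨hw1, hdeg, hlt⟩ := ih (fun j hj => h j (hj.trans (Nat.le_succ i)))
    have hgi : euclRem L H i ≠ 0 := h i (Nat.le_succ i)
    have hgi1 : euclRem L H (i+1) ≠ 0 := h (i+1) le_rfl
    have hdlt : degree (euclRem L H (i+1)) < degree (euclRem L H i) := euclRem_deg_dec hLH i hgi
    have hnlt : (euclRem L H (i+1)).natDegree < (euclRem L H i).natDegree :=
      natDegree_lt_natDegree hgi1 hdlt
    set q := euclRem L H i / euclRem L H (i+1) with hq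
    have hdm := EuclideanDomain.div_add_mod (euclRem L H i) (euclRem L H (i+1))
    rw [← hq] at hdm
    have hmod : degree (euclRem L H i % euclRem L H (i+1)) < degree (euclRem L H (i+1)) :=
      degree_mod_lt' _ hgi1
    have hqne : q ≠ 0 := by
      intro h0
      rw [h0, mul_zero, zero_add] at hdm
      rw [hdm] at hmod
      exact absurd hdlt (lt_asymm hmod)
    have h2 : degree (euclRem L H i % euclRem L H (i+1)) < degree (euclRem L H (i+1) * q) := by
      rw [degree_mul]
      exact hmod.trans_le (le_add_of_nonneg_right (zero_le_degree_iff.2 hqne))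
    have hdq : degree (euclRem L H i) = degree (euclRem L H (i+1)) + degree q := by
      rw [← hdm, degree_add_eq_left_of_degree_lt h2, degree_mul]
    have hnq : (euclRem L H i).natDegree = (euclRem L H (i+1)).natDegree + q.natDegree := by
      rw [degree_eq_natDegree hgi, degree_eq_natDegree hgi1, degree_eq_natDegree hqne,
        ← Nat.cast_add] at hdq
      exact_mod_cast hdq
    have hq1 : 1 ≤ q.natDegree := by omega
    have hqw : q * wseq L H (i+1) ≠ 0 := mul_ne_zero hqne hw1
    have hlt2 : degree (wseq L H (i+1)) < degree (q * wseq L H (i+1)) := by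
      rw [degree_mul, degree_eq_natDegree hqne, degree_eq_natDegree hw1, ← Nat.cast_add]
      exact_mod_cast (by omega : (wseq L H (i+1)).natDegree < q.natDegree + (wseq L H (i+1)).natDegree)
    have hlt3 : degree (wseq L H i) < degree (q * wseq L H (i+1)) := hlt.trans hlt2
    have hw2eq : wseq L H (i+2) = wseq L H i - q * wseq L H (i+1) := wseq_add_two L H i
    have hdw2 : degree (wseq L H (i+2)) = degree (q * wseq L H (i+1)) := by
      rw [hw2eq]; exact degree_sub_eq_right_of_degree_lt hlt3
    have hw2ne : wseq L H (i+2) ≠ 0 := by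
      intro h0
      rw [h0, degree_zero] at hdw2
      exact hqw (degree_eq_bot.1 hdw2.symm)
    have hnw2 : (wseq L H (i+2)).natDegree = q.natDegree + (wseq L H (i+1)).natDegree := by
      rw [degree_eq_natDegree hw2ne, degree_mul, degree_eq_natDegree hqne,
        degree_eq_natDegree hw1, ← Nat.cast_add] at hdw2
      exact_mod_cast hdw2
    refine ⟨hw2ne, ?_, ?_⟩
    · show (wseq L H (i+2)).natDegree + (euclRem L H (i+1)).natDegree = L.natDegree
      omega
    · show degree (wseq L H (i+1)) < degree (wseq L H (i+2))
      rw [hdw2]; exact hlt2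

end EEA
end GRSAux

open Polynomial GRSAux

set_option linter.unusedVariables false

/-- With `g_0, …, g_{t+1}` the remainders of the Extended Euclidean Algorithm applied to `L` and
`H` (so `g_{t+1}` is the last nonzero remainder), `C_k(A, v)` is LCD iff for every
`i ∈ {1, …, t+1}`, either `deg g_{i−1} ≤ n − k` or `deg g_i ≥ n − k`. -/
theorem grs_isLCD_iff_remainders {K : Type*} [Field K] {n : ℕ} (a : Fin n → K)
    (ha : Function.Injective a) (v : Fin n → K) (hv : ∀ i, v i ≠ 0)
    (k : ℕ) (hk : 1 ≤ k) (hkn : k ≤ n - 1) (t : ℕ)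
    (ht1 : euclRem (Lpoly a) (Hpoly a v) (t + 1) ≠ 0)
    (ht2 : euclRem (Lpoly a) (Hpoly a v) (t + 2) = 0) :
    IsLCD (grsFin a v k) ↔
      ∀ i, 1 ≤ i → i ≤ t + 1 →
        (euclRem (Lpoly a) (Hpoly a v) (i - 1)).natDegree ≤ n - k ∨
        n - k ≤ (euclRem (Lpoly a) (Hpoly a v) i).natDegree := by
  classical
  have hn2 : 2 ≤ n := by omega
  set m := n - k with hm
  have hm1 : 1 ≤ m := by omega
  have hkm : k + m = n := by omega
  set L := Lpoly a with hL
  set Hh := Hpoly a v with hHh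
  have hLmon : L.Monic := Lpoly_monic a
  have hLne : L ≠ 0 := hLmon.ne_zero
  have hLdeg : L.degree = (n : WithBot ℕ) := Lpoly_degree a
  have hLnd : L.natDegree = n := Lpoly_natDegree a
  have hHdeg : Hh.degree < L.degree := by
    rw [hLdeg]; exact Hpoly_degree_lt (by omega) a v
  have hc : IsCoprime L Hh := isCoprime_L_H ha hv
  -- helper for WithBot ℕ
  have wb_le_pred : ∀ (x : WithBot ℕ) (mm : ℕ), x < (mm : WithBot ℕ) →
      x ≤ ((mm - 1 : ℕ) : WithBot ℕ) := by
    intro x mm hx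
    induction x using WithBot.recBotCoe with
    | bot => exact bot_le
    | coe y =>
      rw [Nat.cast_withBot] at hx ⊢
      rw [WithBot.coe_lt_coe] at hx
      exact WithBot.coe_le_coe.2 (by omega)
  set Φ : Polynomial K →ₗ[K] (Fin n → K) :=
    LinearMap.pi fun i => v i • (Polynomial.aeval (a i)).toLinearMap with hΦ
  have hΦapp : ∀ (f : Polynomial K) (i : Fin n), Φ f i = v i * f.eval (a i) := by
    intro f i
    simp [hΦ, LinearMap.pi_apply, Polynomial.coe_aeval_eq_eval, smul_eq_mul]
  have hmemC : ∀ c, c ∈ grsFin a v k ↔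
      ∃ f : Polynomial K, f.degree < (k : WithBot ℕ) ∧ Φ f = c := by
    intro c
    constructor
    · rintro ⟨f, hf, rfl⟩
      exact ⟨f, Polynomial.mem_degreeLT.1 hf, rfl⟩
    · rintro ⟨f, hf, rfl⟩
      exact ⟨f, Polynomial.mem_degreeLT.2 hf, rfl⟩
  have hdualmem : ∀ c, c ∈ dualCode (grsFin a v k) ↔
      ∀ c' ∈ grsFin a v k, ∑ i, c i * c' i = 0 := fun c => Iff.rfl
  have key_sum : ∀ f h : Polynomial K,
      (∑ i, Φ f i * Φ h i) = ((Hh * (f * h)) %ₘ L).coeff (n-1) := by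
    intro f h
    have hkc := key_coeff (show 0 < n by omega) ha v (f * h)
    rw [← hL, ← hHh] at hkc
    rw [hkc]
    refine Finset.sum_congr rfl fun i _ => ?_
    rw [hΦapp, hΦapp, eval_mul]
    ring
  have hshift : ∀ f h : Polynomial K,
      (Hh * (f * h)) %ₘ L = (((Hh * f) %ₘ L) * h) %ₘ L := by
    intro f h
    have hdvd : L ∣ (Hh * (f * h) - ((Hh * f) %ₘ L) * h) := by
      refine ⟨((Hh * f) /ₘ L) * h, ?_⟩
      have h5 := modByMonic_add_div (Hh * f) L
      linear_combination -h * h5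
    have h6 := (modByMonic_eq_zero_iff_dvd hLmon).2 hdvd
    rw [sub_modByMonic] at h6
    exact sub_eq_zero.1 h6
  have main1 : ¬ IsLCD (grsFin a v k) ↔
      ∃ f : Polynomial K, f ≠ 0 ∧ f.degree < (k : WithBot ℕ) ∧
        ((Hh * f) %ₘ L).degree < (m : WithBot ℕ) := by
    constructor
    · intro hne
      rw [IsLCD] at hne
      obtain ⟨c, hcmem, hcne⟩ := (Submodule.ne_bot_iff _).1 hne
      obtain ⟨hcC, hcD⟩ := Submodule.mem_inf.1 hcmem
      obtain ⟨f, hfdeg, hfc⟩ := (hmemC c).1 hcC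
      have hfne : f ≠ 0 := by rintro rfl; rw [map_zero] at hfc; exact hcne hfc.symm
      refine ⟨f, hfne, hfdeg, ?_⟩
      by_contra hge
      push_neg at hge
      set r := (Hh * f) %ₘ L with hr
      have hrne : r ≠ 0 := by
        intro h0
        rw [h0, degree_zero] at hge
        exact absurd hge (by simp)
      have hrdeg : r.degree < (n : WithBot ℕ) := by
        have h8 := degree_modByMonic_lt (Hh * f) hLmon
        rw [← hr, hLdeg] at h8
        exact h8
      have hd0 : r.natDegree < n := (natDegree_lt_iff_degree_lt hrne).2 hrdeg
      have hmd0 : m ≤ r.natDegree := by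
        rw [degree_eq_natDegree hrne] at hge
        exact_mod_cast hge
      set hp := (X : Polynomial K) ^ (n - 1 - r.natDegree) with hhp
      have hhdegn : hp.degree = ((n - 1 - r.natDegree : ℕ) : WithBot ℕ) := degree_X_pow _
      have hhlt : hp.degree < (k : WithBot ℕ) := by
        rw [hhdegn]
        exact_mod_cast (by omega : n - 1 - r.natDegree < k)
      have hdual := ((hdualmem c).1 hcD) (Φ hp) ((hmemC (Φ hp)).2 ⟨hp, hhlt, rfl⟩)
      rw [← hfc, key_sum f hp, hshift f hp, ← hr] at hdual
      have hrh : (r * hp) %ₘ L = r * hp := (modByMonic_eq_self_iff hLmon).2 (by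
        rw [hLdeg, degree_mul, degree_eq_natDegree hrne, hhdegn, ← Nat.cast_add]
        exact_mod_cast (by omega : r.natDegree + (n - 1 - r.natDegree) < n))
      rw [hrh] at hdual
      have hco : (r * hp).coeff (n-1) = r.coeff r.natDegree := by
        have h7 := coeff_mul_X_pow r (n - 1 - r.natDegree) r.natDegree
        rw [show r.natDegree + (n - 1 - r.natDegree) = n - 1 from by omega] at h7
        rw [hhp]
        exact h7
      rw [hco] at hdual
      exact hrne (leadingCoeff_eq_zero.1 hdual)
    · rintro ⟨f, hfne, hfdeg, hfr⟩
      intro hLCD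
      rw [IsLCD] at hLCD
      have hcC : Φ f ∈ grsFin a v k := (hmemC _).2 ⟨f, hfdeg, rfl⟩
      have hcD : Φ f ∈ dualCode (grsFin a v k) := by
        rw [hdualmem]
        intro c' hc'
        obtain ⟨h, hhdeg, rfl⟩ := (hmemC c').1 hc'
        rw [key_sum f h, hshift f h]
        have hdeg2 : (((Hh * f) %ₘ L) * h).degree ≤ ((n - 2 : ℕ) : WithBot ℕ) := by
          refine (degree_mul_le _ _).trans ?_
          calc ((Hh * f) %ₘ L).degree + h.degree
              ≤ ((m - 1 : ℕ) : WithBot ℕ) + ((k - 1 : ℕ) : WithBot ℕ) :=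
                add_le_add (wb_le_pred _ _ hfr) (wb_le_pred _ _ hhdeg)
            _ = ((n - 2 : ℕ) : WithBot ℕ) := by
                rw [← Nat.cast_add, show m - 1 + (k - 1) = n - 2 from by omega]
        have hrh : (((Hh * f) %ₘ L) * h) %ₘ L = ((Hh * f) %ₘ L) * h :=
          (modByMonic_eq_self_iff hLmon).2 (by
            rw [hLdeg]
            exact lt_of_le_of_lt hdeg2 (by exact_mod_cast (by omega : n - 2 < n)))
        rw [hrh]
        apply coeff_eq_zero_of_degree_lt
        exact lt_of_le_of_lt hdeg2 (by exact_mod_cast (by omega : n - 2 < n - 1))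
      have hcne : Φ f ≠ 0 := by
        intro h0
        have hev : ∀ j, f.eval (a j) = 0 := by
          intro j
          have h9 := congrFun h0 j
          rw [hΦapp] at h9
          rcases mul_eq_zero.1 h9 with h9 | h9
          · exact absurd h9 (hv j)
          · exact h9
        have hdvd : L ∣ f := by rw [hL]; exact Lpoly_dvd ha hev
        exact hfne (eq_zero_of_dvd_of_degree_lt hdvd (by
          rw [hLdeg]
          exact hfdeg.trans_le (by exact_mod_cast (by omega : k ≤ n))))
      have hbot : Φ f ∈ (⊥ : Submodule K (Fin n → K)) :=
        hLCD ▸ Submodule.mem_inf.2 ⟨hcC, hcD⟩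
      exact hcne ((Submodule.mem_bot K).1 hbot)
  have main2 : (∃ f : Polynomial K, f ≠ 0 ∧ f.degree < (k : WithBot ℕ) ∧
        ((Hh * f) %ₘ L).degree < (m : WithBot ℕ)) ↔
      ∃ i, 1 ≤ i ∧ i ≤ t + 1 ∧ m < (euclRem L Hh (i - 1)).natDegree ∧
        (euclRem L Hh i).natDegree < m := by
    constructor
    · rintro ⟨f, hfne, hfdeg, hfr⟩
      have hex : ∃ s, (euclRem L Hh s).degree < (m : WithBot ℕ) :=
        ⟨t + 2, by rw [ht2, degree_zero]; exact WithBot.bot_lt_coe m⟩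
      set s := Nat.find hex with hs
      have hsP : (euclRem L Hh s).degree < (m : WithBot ℕ) := Nat.find_spec hex
      have hsmin : ∀ j, j < s → ¬ (euclRem L Hh j).degree < (m : WithBot ℕ) :=
        fun j hj => Nat.find_min hex hj
      have hs1 : 1 ≤ s := by
        rcases Nat.eq_zero_or_pos s with h0 | h1
        · exfalso
          rw [h0] at hsP
          rw [euclRem_zero, hLdeg] at hsP
          exact absurd hsP (by exact_mod_cast (by omega : ¬ n < m))
        · exact h1
      have hjne : ∀ j, j < s → euclRem L Hh j ≠ 0 := by
        intro j hj h0
        exact hsmin j hj (by rw [h0, degree_zero]; exact WithBot.bot_lt_coe m)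
      have hss : s - 1 + 1 = s := by omega
      obtain ⟨hwne, hwdeg, _⟩ := wseq_deg hHdeg (s - 1) (fun j hj => hjne j (by omega))
      rw [hss] at hwne hwdeg
      have hgs1ne : euclRem L Hh (s - 1) ≠ 0 := hjne _ (by omega)
      have hgsne : euclRem L Hh s ≠ 0 := by
        intro h0
        have hcop := euclRem_isCoprime hc (s - 1)
        rw [hss, h0] at hcop
        have hu := isCoprime_zero_right.1 hcop
        exact hsmin (s - 1) (by omega) (by
          rw [degree_eq_zero_of_isUnit hu]
          exact_mod_cast (by omega : 0 < m))
      have hslet : s ≤ t + 1 := by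
        have hsle : s ≤ t + 2 :=
          Nat.find_le (by rw [ht2, degree_zero]; exact WithBot.bot_lt_coe m)
        by_contra hgt
        have hseq : s = t + 2 := by omega
        have hcop := euclRem_isCoprime hc (t + 1)
        rw [ht2] at hcop
        have hu := isCoprime_zero_right.1 hcop
        exact hsmin (t + 1) (by omega) (by
          rw [degree_eq_zero_of_isUnit hu]
          exact_mod_cast (by omega : 0 < m))
      have hml : (m : WithBot ℕ) ≤ (euclRem L Hh (s - 1)).degree :=
        not_lt.1 (hsmin (s - 1) (by omega))
      have hmnat : m ≤ (euclRem L Hh (s - 1)).natDegree := by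
        rw [degree_eq_natDegree hgs1ne] at hml
        exact_mod_cast hml
      have hne_eq : (euclRem L Hh (s - 1)).natDegree ≠ m := by
        intro heq
        have hwd : (wseq L Hh s).natDegree = k := by
          rw [hLnd] at hwdeg; omega
        set r := (Hh * f) %ₘ L with hr
        have hrupr : Hh * f - r = L * ((Hh * f) /ₘ L) := by
          have h5 := modByMonic_add_div (Hh * f) L
          rw [← hr] at h5
          linear_combination -h5
        have hrepr := euclRem_repr L Hh s
        have hkey : f * euclRem L Hh s - wseq L Hh s * r =
            (f * useq L Hh s + wseq L Hh s * ((Hh * f) /ₘ L)) * L := by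
          linear_combination f * hrepr + wseq L Hh s * hrupr
        have hdlt : (f * euclRem L Hh s - wseq L Hh s * r).degree < L.degree := by
          rw [hLdeg]
          refine lt_of_le_of_lt (degree_sub_le _ _) (max_lt ?_ ?_)
          · refine lt_of_le_of_lt (degree_mul_le _ _) ?_
            calc f.degree + (euclRem L Hh s).degree
                ≤ ((k - 1 : ℕ) : WithBot ℕ) + ((m - 1 : ℕ) : WithBot ℕ) :=
                  add_le_add (wb_le_pred _ _ hfdeg) (wb_le_pred _ _ hsP)
              _ < (n : WithBot ℕ) := by
                  rw [← Nat.cast_add]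
                  exact_mod_cast (by omega : k - 1 + (m - 1) < n)
          · refine lt_of_le_of_lt (degree_mul_le _ _) ?_
            calc (wseq L Hh s).degree + r.degree
                ≤ ((k : ℕ) : WithBot ℕ) + ((m - 1 : ℕ) : WithBot ℕ) := by
                  refine add_le_add ?_ (wb_le_pred _ _ hfr)
                  rw [degree_eq_natDegree hwne, hwd]
              _ < (n : WithBot ℕ) := by
                  rw [← Nat.cast_add]
                  exact_mod_cast (by omega : k + (m - 1) < n)
        have hz : f * euclRem L Hh s - wseq L Hh s * r = 0 := by
          by_contra hnz
          have hdvd : L ∣ (f * euclRem L Hh s - wseq L Hh s * r) :=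
            ⟨f * useq L Hh s + wseq L Hh s * ((Hh * f) /ₘ L), by rw [hkey]; ring⟩
          exact absurd hdlt (not_lt.2 (degree_le_of_dvd hdvd hnz))
        have hLz : (f * useq L Hh s + wseq L Hh s * ((Hh * f) /ₘ L)) * L = 0 := by
          rw [← hkey, hz]
        have h6 : f * useq L Hh s = -(wseq L Hh s * ((Hh * f) /ₘ L)) := by
          rcases mul_eq_zero.1 hLz with h7 | h7
          · linear_combination h7
          · exact absurd h7 hLne
        have hdvd_f : wseq L Hh s ∣ f := by
          refine (wseq_useq_coprime L Hh s).dvd_of_dvd_mul_right ⟨-((Hh * f) /ₘ L), ?_⟩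
          rw [h6]; ring
        have h8 : k ≤ f.natDegree := hwd ▸ natDegree_le_of_dvd hdvd_f hfne
        have h9 : f.natDegree < k := (natDegree_lt_iff_degree_lt hfne).2 hfdeg
        omega
      refine ⟨s, hs1, hslet, by omega, ?_⟩
      exact (natDegree_lt_iff_degree_lt hgsne).2 hsP
    · rintro ⟨i, hi1, hit, hgi1, hgi⟩
      have hne : ∀ j, j ≤ i - 1 → euclRem L Hh j ≠ 0 := by
        intro j hj h0
        rcases euclRem_unit_of_zero hc h0 (i - 1 - j) with h | h
        · rw [show j + (i - 1 - j) = i - 1 from by omega] at h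
          rw [h] at hgi1
          simp at hgi1
        · rw [show j + (i - 1 - j) = i - 1 from by omega] at h
          rw [natDegree_eq_zero_of_isUnit h] at hgi1
          omega
      obtain ⟨hwne, hwdeg, _⟩ := wseq_deg hHdeg (i - 1) hne
      have hii : i - 1 + 1 = i := by omega
      rw [hii] at hwne hwdeg
      refine ⟨wseq L Hh i, hwne, ?_, ?_⟩
      · rw [degree_eq_natDegree hwne]
        exact_mod_cast (by rw [hLnd] at hwdeg; omega : (wseq L Hh i).natDegree < k)
      · have hrepr := euclRem_repr L Hh i
        have hmodeq : (Hh * wseq L Hh i) %ₘ L = euclRem L Hh i %ₘ L := by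
          have hdvd : L ∣ (Hh * wseq L Hh i - euclRem L Hh i) :=
            ⟨-(useq L Hh i), by linear_combination -hrepr⟩
          have h6 := (modByMonic_eq_zero_iff_dvd hLmon).2 hdvd
          rw [sub_modByMonic] at h6
          exact sub_eq_zero.1 h6
        have hself : euclRem L Hh i %ₘ L = euclRem L Hh i :=
          (modByMonic_eq_self_iff hLmon).2 (by
            rw [hLdeg]
            refine lt_of_le_of_lt degree_le_natDegree ?_
            exact_mod_cast (by omega : (euclRem L Hh i).natDegree < n))
        rw [hmodeq, hself]
        refine lt_of_le_of_lt degree_le_natDegree ?_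
        exact_mod_cast hgi
  rw [← not_iff_not]
  push_neg
  rw [main1, main2]
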